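/- For all k ≥ 1, the function f(d) = dk − (3/4)d² + d/2 + (1/4)·[d odd] over positive integers d attains its maximum at the integer nearest to (2k+1)/3, and this maximum value equals (k²+k+1)/3 if k ≡ 1 (mod 3) and (k²+k)/3 otherwise. Furthermore, the maximizing d satisfies d ≤ k+1. -/

import Mathlib

open SimpleGraph Finset

variable {V : Type*}

/-- Truncated graph distance `d_k(x,y) = min(d(x,y), k+1)`. -/
noncomputable def dk (G : SimpleGraph V) (k : ℕ) (x y : V) : ℕ := min (G.dist x y) (k + 1)

/-- `w` lies on a shortest path (in a tree: the unique path) between `x` and `y`. -/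
def OnPath (G : SimpleGraph V) (x y w : V) : Prop :=
  G.dist x w + G.dist w y = G.dist x y

/-- `S` is a threshold-`k` resolving set for `G`. -/
def ThresholdResolving (G : SimpleGraph V) (k : ℕ) (S : Set V) : Prop :=
  (∀ x y : V, x ≠ y → ∃ s ∈ S, dk G k s x ≠ dk G k s y) ∧
  (∀ x : V, ∃ s ∈ S, G.dist s x ≤ k)

/-- A sensor `s` directly measures `x`: `d(s,x) ≤ k` and no other sensor lies on the
path from `s` to `x`. -/
def DirectlyMeasures (G : SimpleGraph V) (k : ℕ) (S : Set V) (s x : V) : Prop :=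
  G.dist s x ≤ k ∧ ∀ t ∈ S, t ≠ s → ¬ OnPath G s x t

/-- The threshold-`k` metric dimension of a finite graph. -/
noncomputable def Tmd (G : SimpleGraph V) [Fintype V] (k : ℕ) : ℕ :=
  sInf {m | ∃ S : Finset V, ThresholdResolving G k ↑S ∧ S.card = m}

/-- The path between the sensors `s₁ ≠ s₂` contains no other sensor. -/
def SensorPath (G : SimpleGraph V) (S : Set V) (s₁ s₂ : V) : Prop :=
  s₁ ≠ s₂ ∧ s₁ ∈ S ∧ s₂ ∈ S ∧ ∀ t ∈ S, OnPath G s₁ s₂ t → t = s₁ ∨ t = s₂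

/-- The edge `{a,b}` lies on the (tree-)path between `x` and `y`. -/
def EdgeOnPath (G : SimpleGraph V) (x y a b : V) : Prop :=
  G.Adj a b ∧ OnPath G x y a ∧ OnPath G x y b

/-- A leaf-path of length `ℓ` starting at `v`: an induced path `v = p 0, p 1, …, p ℓ`
with `deg v ≥ 3`, ending in a leaf, all internal vertices of degree 2. -/
def IsLeafPath (G : SimpleGraph V) [Fintype V] [DecidableRel G.Adj]
    (v : V) (ℓ : ℕ) (p : Fin (ℓ + 1) → V) : Prop :=
  Function.Injective p ∧ p 0 = v ∧ 3 ≤ G.degree v ∧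
  (∀ i : Fin ℓ, G.Adj (p i.castSucc) (p i.succ)) ∧
  G.degree (p (Fin.last ℓ)) = 1 ∧
  ∀ i : Fin (ℓ + 1), (i : ℕ) ≠ 0 → (i : ℕ) ≠ ℓ → G.degree (p i) = 2

/-- Upper complexity of a path of length `ℓ` (with `ℓ = q(3k+2)+r`). -/
def cbar (k ℓ : ℕ) : ℕ :=
  2 * (ℓ / (3 * k + 2)) + (if 1 ≤ ℓ % (3 * k + 2) then 1 else 0) +
    (if 2 * k + 2 ≤ ℓ % (3 * k + 2) then 1 else 0)

/-- Lower complexity of a path of length `ℓ` (with `ℓ = q(3k+2)+r`). -/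
def clow (k ℓ : ℕ) : ℕ :=
  2 * (ℓ / (3 * k + 2)) + (if k + 1 ≤ ℓ % (3 * k + 2) then 1 else 0) +
    (if 2 * k + 2 ≤ ℓ % (3 * k + 2) then 1 else 0)

/-- The type of a vertex `v` with respect to the sensor pair `(s, s')`. -/
noncomputable def typ (G : SimpleGraph V) (s s' v : V) : ℤ :=
  ((G.dist v s : ℤ) - (G.dist v s' : ℤ) + (G.dist s s' : ℤ)) / 2

/-- The attraction of the pair of sensors `{s, s'}`. -/
def PairAttraction (G : SimpleGraph V) (k : ℕ) (S : Set V) (s s' : V) : Set V :=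
  {x | x ∉ S ∧ DirectlyMeasures G k S s x ∧ DirectlyMeasures G k S s' x ∧
    (∀ t ∈ S, t ≠ s → t ≠ s' → ¬ DirectlyMeasures G k S t x) ∧
    ∀ y : V, y ≠ x → y ∉ S →
      (∀ t ∈ S, t ≠ s → t ≠ s' → ¬ DirectlyMeasures G k S t y) →
      dk G k s x ≠ dk G k s y ∨ dk G k s' x ≠ dk G k s' y}

/-- The subset of sensors `S' ⊆ S` minimally resolves the vertex `x`. -/
def MinimallyResolves (G : SimpleGraph V) (k : ℕ) (S S' : Set V) (x : V) : Prop :=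
  x ∉ S ∧ (∀ s ∈ S', G.dist s x ≤ k) ∧
  (∀ t ∈ S, t ∉ S' → ¬ DirectlyMeasures G k S t x) ∧
  (∀ y : V, y ≠ x → (∀ t ∈ S, t ∉ S' → ¬ DirectlyMeasures G k S t y) →
    ∃ s ∈ S', dk G k s x ≠ dk G k s y) ∧
  (∀ s ∈ S', DirectlyMeasures G k S s x)

/-!
Completing the square, `12 f(d) = (2k+1)² - (e² - 3[e even])` with `e = 3d - (2k+1)`, and `e` is
even exactly when `d` is odd. As `d` ranges over ℕ, `e` ranges over a residue class modulo 3, and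
`e² - 3[e even]` is `-3` at `e = 0` and at least `1` elsewhere (equal to `1` at `e = ±1`). So
the maximum is `((2k+1)² + 3)/12` when `3 ∣ 2k+1`, i.e. `k ≡ 1 (mod 3)`, and `((2k+1)² - 1)/12`
otherwise, attained at the `d` with `|3d - (2k+1)| ≤ 1`.
-/

def attraction (k d : ℕ) : ℚ :=
  (d : ℚ) * k - 3 / 4 * (d : ℚ) ^ 2 + (d : ℚ) / 2 + (if Odd d then 1 / 4 else 0)

def maxAttraction (k : ℕ) : ℚ :=
  if k % 3 = 1 then ((k : ℚ) ^ 2 + k + 1) / 3 else ((k : ℚ) ^ 2 + k) / 3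

def nearestMaximizer (k : ℕ) : ℕ :=
  if k % 3 = 0 then 2 * k / 3 else if k % 3 = 1 then (2 * k + 1) / 3 else (2 * k + 2) / 3

theorem twelve_mul_attraction (k d : ℕ) :
    12 * attraction k d =
      (2 * k + 1 : ℚ) ^ 2 - ((3 * d - (2 * k + 1) : ℚ) ^ 2 - if Odd d then 3 else 0) := by
  unfold attraction
  split_ifs <;> ring

theorem one_le_sq_sub_ite_even {e : ℤ} (he : ¬ 3 ∣ e) : 1 ≤ e ^ 2 - if Even e then 3 else 0 := by
  have he0 : e ≠ 0 := by rintro rfl; simp at he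
  split_ifs with heven
  · obtain ⟨j, rfl⟩ := heven
    have hj : j ≠ 0 := by rintro rfl; simp at he0
    rcases hj.lt_or_gt with hj | hj <;> nlinarith
  · rcases he0.lt_or_gt with he0 | he0 <;> nlinarith

theorem attraction_le_maxAttraction (k d : ℕ) : attraction k d ≤ maxAttraction k := by
  set e : ℤ := 3 * d - (2 * k + 1) with he
  have he_cast : (e : ℚ) = 3 * d - (2 * k + 1) := by rw [he]; push_cast; ring
  have hpar : Odd d ↔ Even e := by rw [Nat.odd_iff, Int.even_iff]; omega
  have h12 := twelve_mul_attraction k d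
  simp only [hpar, ← he_cast] at h12
  unfold maxAttraction
  split_ifs with hk
  · have : (-3 : ℚ) ≤ (e : ℚ) ^ 2 - if Even e then 3 else 0 := by
      split_ifs <;> nlinarith [sq_nonneg (e : ℚ)]
    linarith
  · have : (1 : ℚ) ≤ (e : ℚ) ^ 2 - if Even e then 3 else 0 := by
      have h := one_le_sq_sub_ite_even (e := e) (by omega)
      split_ifs at h ⊢ <;> exact_mod_cast h
    linarith

theorem exists_nearestMaximizer_eq (k : ℕ) :
    ∃ m r, r < 3 ∧ k = 3 * m + r ∧ nearestMaximizer k = 2 * m + r :=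
  ⟨k / 3, k % 3, Nat.mod_lt _ (by norm_num), (Nat.div_add_mod k 3).symm, by
    unfold nearestMaximizer; split_ifs <;> omega⟩

theorem attraction_nearestMaximizer (k : ℕ) :
    attraction k (nearestMaximizer k) = maxAttraction k := by
  obtain ⟨m, r, hr, rfl, hd⟩ := exists_nearestMaximizer_eq k
  rw [hd]
  interval_cases r <;> simp [attraction, maxAttraction, Nat.odd_iff, Nat.add_mod] <;> ring

theorem abs_nearestMaximizer_sub_le (k : ℕ) :
    |(nearestMaximizer k : ℚ) - (2 * k + 1) / 3| ≤ 1 / 2 := by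
  obtain ⟨m, r, hr, rfl, hd⟩ := exists_nearestMaximizer_eq k
  have hr' : (r : ℚ) ≤ 2 := by exact_mod_cast (by omega : r ≤ 2)
  rw [hd, abs_le]
  push_cast
  constructor <;> linarith

theorem nearestMaximizer_le (k : ℕ) : nearestMaximizer k ≤ k + 1 := by
  obtain ⟨m, r, hr, rfl, hd⟩ := exists_nearestMaximizer_eq k
  omega

theorem stmt18_general (k : ℕ) :
    let f : ℕ → ℚ := fun d =>
      (d : ℚ) * k - 3 / 4 * (d : ℚ) ^ 2 + (d : ℚ) / 2 + (if Odd d then 1 / 4 else 0)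
    let d₀ : ℕ := if k % 3 = 0 then 2 * k / 3 else
      if k % 3 = 1 then (2 * k + 1) / 3 else (2 * k + 2) / 3
    (∀ d : ℕ, 1 ≤ d → f d ≤ f d₀) ∧
    |(d₀ : ℚ) - (2 * (k : ℚ) + 1) / 3| ≤ 1 / 2 ∧
    f d₀ = (if k % 3 = 1 then ((k : ℚ) ^ 2 + k + 1) / 3 else ((k : ℚ) ^ 2 + k) / 3) ∧
    d₀ ≤ k + 1 := by
  exact ⟨fun d _ => (attraction_le_maxAttraction k d).trans_eq (attraction_nearestMaximizer k).symm,
    abs_nearestMaximizer_sub_le k, attraction_nearestMaximizer k, nearestMaximizer_le k⟩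

/-- `f(d) = dk − (3/4)d² + d/2 + (1/4)[d odd]` is maximized over
positive integers at the integer nearest to `(2k+1)/3`, with the stated maximum,
and the maximizer is at most `k+1`. -/
theorem stmt18 (k : ℕ) (hk : 1 ≤ k) :
    let f : ℕ → ℚ := fun d =>
      (d : ℚ) * k - 3 / 4 * (d : ℚ) ^ 2 + (d : ℚ) / 2 + (if Odd d then 1 / 4 else 0)
    let d₀ : ℕ := if k % 3 = 0 then 2 * k / 3 else
      if k % 3 = 1 then (2 * k + 1) / 3 else (2 * k + 2) / 3
    (∀ d : ℕ, 1 ≤ d → f d ≤ f d₀) ∧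
    |(d₀ : ℚ) - (2 * (k : ℚ) + 1) / 3| ≤ 1 / 2 ∧
    f d₀ = (if k % 3 = 1 then ((k : ℚ) ^ 2 + k + 1) / 3 else ((k : ℚ) ^ 2 + k) / 3) ∧
    d₀ ≤ k + 1 :=
  stmt18_general k
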